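/- Let τ be an even Hermitian N×N matrix with Tr τ = 0 and ‖τ‖₁ ≤ ε, written as τ = α₀·I/2^m + Σ_{k=1}^{m} Σ_{1 ≤ a_1 < … < a_{2k} ≤ 2m} α_{a_1…a_{2k}} · i^k c_{a_1}⋯c_{a_{2k}} with real coefficients. Then α₀ = 0 and |α_{a_1…a_{2k}}| ≤ ε/2^m for every subset {a_1 < … < a_{2k}}. -/

import Mathlib

open Matrix Kronecker Finset
open scoped ComplexOrder

noncomputable section

/-- A Majorana family: `2*m` Hermitian `2^m × 2^m` complex matrices squaring to the
identity and pairwise anticommuting. -/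
structure MajoranaFamily (m : ℕ) where
  c : Fin (2*m) → Matrix (Fin (2^m)) (Fin (2^m)) ℂ
  herm : ∀ j, (c j).IsHermitian
  sq : ∀ j, c j * c j = 1
  anticomm : ∀ j k, j ≠ k → c j * c k = -(c k * c j)

abbrev Mat (m : ℕ) := Matrix (Fin (2^m)) (Fin (2^m)) ℂ
abbrev Mat2 (m : ℕ) := Matrix (Fin (2^m) × Fin (2^m)) (Fin (2^m) × Fin (2^m)) ℂ
abbrev MatN (m n : ℕ) := Matrix (Fin n → Fin (2^m)) (Fin n → Fin (2^m)) ℂ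

variable {m : ℕ}

/-- A state: a positive semidefinite matrix of trace `1`. -/
def IsState {ι : Type*} [Fintype ι] (ρ : Matrix ι ι ℂ) : Prop :=
  ρ.PosSemidef ∧ ρ.trace = 1

/-- The trace norm `‖X‖₁ = Tr √(XᴴX)`. -/
def traceNorm {ι : Type*} [Fintype ι] [DecidableEq ι] (X : Matrix ι ι ℂ) : ℝ :=
  (((Matrix.posSemidef_conjTranspose_mul_self X).1.eigenvectorUnitary.1 *
    diagonal ((fun x : ℝ => (x : ℂ)) ∘ (√·) ∘ (Matrix.posSemidef_conjTranspose_mul_self X).1.eigenvalues) *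
    (star (Matrix.posSemidef_conjTranspose_mul_self X).1.eigenvectorUnitary :
      Matrix ι ι ℂ)).trace).re

/-- The rotated Majorana operators `c̃_j = Σ_i R_{ij} c_i`. -/
def tilde (F : MajoranaFamily m) (R : Matrix (Fin (2*m)) (Fin (2*m)) ℝ)
    (j : Fin (2*m)) : Mat m :=
  ∑ i, (R i j : ℂ) • F.c i

/-- Standard-form Gaussian state `2^{-m} ∏_{k=1}^m (I + i λ_k c̃_{2k-1} c̃_{2k})`
(ordered product; the factors commute). -/
def gaussStd (F : MajoranaFamily m) (R : Matrix (Fin (2*m)) (Fin (2*m)) ℝ)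
    (lam : Fin m → ℝ) : Mat m :=
  ((2:ℂ)^m)⁻¹ • (List.ofFn (fun k : Fin m =>
    (1 : Mat m) + (Complex.I * (lam k : ℂ)) •
      (tilde F R ⟨2*k.val, by omega⟩ * tilde F R ⟨2*k.val+1, by omega⟩))).prod

/-- A pure Gaussian state: a standard-form Gaussian state with all `λ_k ∈ {-1,1}`,
for some `R ∈ SO(2m,ℝ)`. -/
def IsPureGaussian (F : MajoranaFamily m) (ρ : Mat m) : Prop :=
  ∃ (R : Matrix (Fin (2*m)) (Fin (2*m)) ℝ) (lam : Fin m → ℝ),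
    Rᵀ * R = 1 ∧ R.det = 1 ∧ (∀ k, lam k = 1 ∨ lam k = -1) ∧ ρ = gaussStd F R lam

/-- A convex-Gaussian state: a finite convex combination of pure Gaussian states. -/
def IsConvexGaussian (F : MajoranaFamily m) (ρ : Mat m) : Prop :=
  ∃ (k : ℕ) (p : Fin k → ℝ) (g : Fin k → Mat m),
    (∀ i, 0 ≤ p i) ∧ (∑ i, p i) = 1 ∧ (∀ i, IsPureGaussian F (g i)) ∧
    ρ = ∑ i, p i • g i

/-- `Λ = Σ_j c_j ⊗ c_j` on `ℂ^N ⊗ ℂ^N`. -/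
def Lambda (F : MajoranaFamily m) : Mat2 m := ∑ j, F.c j ⊗ₖ F.c j

/-- Ordered product `c_{a_1} ⋯ c_{a_r}` over a finite set `S = {a_1 < … < a_r}`. -/
def majProd (F : MajoranaFamily m) (S : Finset (Fin (2*m))) : Mat m :=
  ((S.sort (· ≤ ·)).map F.c).prod

/-- An even operator: a complex linear combination of the identity and products of
an even number of distinct Majorana operators. -/
def IsEven (F : MajoranaFamily m) (X : Mat m) : Prop :=
  X ∈ Submodule.span ℂ {Y : Mat m | ∃ S : Finset (Fin (2*m)), Even S.card ∧ Y = majProd F S}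

/-- The Hermitian correlator `i^k c_{a_1} ⋯ c_{a_{2k}}` associated to a set of
cardinality `2k`. -/
def corrOp (F : MajoranaFamily m) (S : Finset (Fin (2*m))) : Mat m :=
  (Complex.I ^ (S.card / 2)) • majProd F S

/-- The operator acting as `A` on the `k`-th tensor factor of `(ℂ^N)^{⊗n}` and as the
identity on the other factors. -/
def embedAt (n : ℕ) (k : Fin n) (A : Mat m) : MatN m n :=
  fun x y => A (x k) (y k) * ∏ l ∈ Finset.univ.erase k, (if x l = y l then 1 else 0)

/-- `Λ^{k,l} = Σ_j c_j^{(k)} c_j^{(l)}` on `(ℂ^N)^{⊗n}`. -/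
def LambdaKL (F : MajoranaFamily m) (n : ℕ) (k l : Fin n) : MatN m n :=
  ∑ j, embedAt n k (F.c j) * embedAt n l (F.c j)

/-- Partial trace of an operator on `(ℂ^N)^{⊗n}` over the tensor factors `2, …, n`. -/
def ptrRest (n : ℕ) (hn : 1 ≤ n) (ρ : MatN m n) : Mat m := fun a b =>
  ∑ g : Fin (n-1) → Fin (2^m),
    ρ (fun i => if h : i.val = 0 then a else g ⟨i.val - 1, by omega⟩)
      (fun i => if h : i.val = 0 then b else g ⟨i.val - 1, by omega⟩)

/-- `ρ` has an `n`-Gaussian-symmetric extension. -/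
def HasGSExt (F : MajoranaFamily m) (n : ℕ) (hn : 1 ≤ n) (ρ : Mat m) : Prop :=
  ∃ ext : MatN m n, IsState ext ∧ ptrRest n hn ext = ρ ∧
    ∀ k l : Fin n, k ≠ l → LambdaKL F n k l * ext = 0

/-- `‖Λ‖₁ = 2(m+1) C(2m, m+1)`. -/
def lambdaNorm (m : ℕ) : ℝ := 2*(m+1) * (Nat.choose (2*m) (m+1) : ℝ)

/-- `ε(n) = min {2, 10 ‖Λ‖₁² 2^{2m} n^{-1/3}}`. -/
def epsB (m n : ℕ) : ℝ :=
  min 2 (10 * lambdaNorm m ^ 2 * 2^(2*m) / (n:ℝ) ^ ((1:ℝ)/3))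

/-- `χ(n) = (ε(n)/2) (2m)!/m!`. -/
def chiB (m n : ℕ) : ℝ :=
  epsB m n / 2 * ((Nat.factorial (2*m) : ℝ) / (Nat.factorial m : ℝ))

/-- `δ(n) = χ(n)/(1+χ(n))`. -/
def deltaB (m n : ℕ) : ℝ := chiB m n / (1 + chiB m n)

/-- The parity operator `P = i^m c_1 ⋯ c_{2m}`. -/
def parityOp (F : MajoranaFamily m) : Mat m :=
  (Complex.I ^ m) • (((List.finRange (2*m)).map F.c).prod)

/-- The operator `I^{⊗ r} ⊗ c_s ⊗ P^{⊗(n-r-1)}` on `(ℂ^N)^{⊗n}` (0-based position `r`). -/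
def dOp (F : MajoranaFamily m) (n : ℕ) (r : Fin n) (s : Fin (2*m)) : MatN m n :=
  fun x y => ∏ l : Fin n,
    if l < r then (if x l = y l then 1 else 0)
    else if l = r then F.c s (x l) (y l)
    else parityOp F (x l) (y l)

/-- The family `d_1, …, d_{2mn}`, where `d_{2m(r-1)+s} = I^{⊗(r-1)} ⊗ c_s ⊗ P^{⊗(n-r)}`. -/
def dAll (hm : 1 ≤ m) (F : MajoranaFamily m) (n : ℕ) (j : Fin (2*(m*n))) : MatN m n :=
  dOp F n
    ⟨j.val / (2*m), by
      have h1 := j.isLt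
      rw [Nat.div_lt_iff_lt_mul (by omega)]
      have h2 : n * (2*m) = 2*(m*n) := by ring
      omega⟩
    ⟨j.val % (2*m), Nat.mod_lt _ (by omega)⟩

/-- The index `2m(k-1)+j` (0-based: `2mk + j`) into a family of `2mn` Majorana operators. -/
def bigIdx (m n : ℕ) (k : Fin n) (j : Fin (2*m)) : Fin (2*(m*n)) :=
  ⟨2*m*k.val + j.val, by
    have hk : k.val + 1 ≤ n := k.isLt
    have hj := j.isLt
    have h1 : 2*m*(k.val+1) = 2*m*k.val + 2*m := by ring
    have h2 : 2*m*(k.val+1) ≤ 2*m*n := Nat.mul_le_mul le_rfl hk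
    have h3 : 2*m*n = 2*(m*n) := by ring
    omega⟩

/-- `Γ^{k,l} = Σ_{j=1}^{2m} (-1)^{m-j} e_{2m(k-1)+j} · e_{2m(l-1)+1} ⋯ ê_{2m(l-1)+j} ⋯ e_{2ml}`. -/
def GammaKL (m n : ℕ) (E : MajoranaFamily (m*n)) (k l : Fin n) :
    Matrix (Fin (2^(m*n))) (Fin (2^(m*n))) ℂ :=
  ∑ j : Fin (2*m), ((-1:ℂ) ^ ((m:ℤ) - (j.val+1 : ℤ))) •
    (E.c (bigIdx m n k j) *
      (((List.finRange (2*m)).filter (fun i => i ≠ j)).map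
        (fun i => E.c (bigIdx m n l i))).prod)

/-- `C = i^{mn} e_1 ⋯ e_{2mn}`. -/
def bigParity (m n : ℕ) (E : MajoranaFamily (m*n)) :
    Matrix (Fin (2^(m*n))) (Fin (2^(m*n))) ℂ :=
  (Complex.I ^ (m*n)) • (((List.finRange (2*(m*n))).map E.c).prod)

/-- The `n`-fold tensor power `A^{⊗n}` of a matrix on `ℂ^N`. -/
def tpow (n : ℕ) (A : Mat m) : MatN m n := fun x y => ∏ k, A (x k) (y k)

/-!
For even `S`, the operators `i^k c_S` are unitary and pairwise orthogonal for the Hilbert–Schmidt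
inner product: when `S ≠ T`, any `c_b` with `b ∈ S ∆ T` anticommutes with `(c_S)ᴴ c_T`, which
forces its trace to vanish. Hence `Tr((i^k c_S)ᴴ τ) = 2^m α_S` and `Tr τ = α₀`. On the other hand
`|Tr(U τ)| ≤ ‖τ‖₁` for every unitary `U`: diagonalising the Hermitian `τ` turns `Tr(U τ)` into
`Σ u_ii λ_i` with `|u_ii| ≤ 1`, and `‖τ‖₁ = Σ |λ_i|`.
-/

namespace Matrix.IsHermitian

variable {𝕜 ι : Type*} [RCLike 𝕜] [Fintype ι] [DecidableEq ι] {A : Matrix ι ι 𝕜}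

lemma trace_cfc (hA : A.IsHermitian) (f : ℝ → ℝ) :
    (hA.cfc f).trace = ∑ i, (f (hA.eigenvalues i) : 𝕜) := by
  rw [IsHermitian.cfc, Unitary.conjStarAlgAut_apply, trace_mul_cycle,
    Unitary.coe_star_mul_self, one_mul, trace_diagonal]
  rfl

end Matrix.IsHermitian

lemma traceNorm_eq_sum_abs_eigenvalues {ι : Type*} [Fintype ι] [DecidableEq ι]
    {τ : Matrix ι ι ℂ} (hτ : τ.IsHermitian) :
    traceNorm τ = ∑ i, |hτ.eigenvalues i| := by
  have hsq : τᴴ * τ = τ ^ 2 := by rw [hτ.eq, sq]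
  have hsqrt : cfc Real.sqrt (τᴴ * τ) = cfc (fun x : ℝ => |x|) τ := by
    rw [hsq, ← cfc_comp_pow (R := ℝ) Real.sqrt 2 τ (by fun_prop) hτ.isSelfAdjoint]
    simp only [Real.sqrt_sq_eq_abs]
  calc traceNorm τ = ((posSemidef_conjTranspose_mul_self τ).1.cfc Real.sqrt).trace.re := by
        rw [IsHermitian.cfc, Unitary.conjStarAlgAut_apply]; rfl
    _ = (hτ.cfc fun x => |x|).trace.re := by
        rw [← IsHermitian.cfc_eq, hsqrt, IsHermitian.cfc_eq]
    _ = ∑ i, |hτ.eigenvalues i| := by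
        simp [IsHermitian.trace_cfc, Complex.re_sum]

lemma norm_trace_mul_le_traceNorm {ι : Type*} [Fintype ι] [DecidableEq ι]
    {A τ : Matrix ι ι ℂ} (hA : A ∈ unitaryGroup ι ℂ) (hτ : τ.IsHermitian) :
    ‖(A * τ).trace‖ ≤ traceNorm τ := by
  set U : Matrix ι ι ℂ := (hτ.eigenvectorUnitary : Matrix ι ι ℂ)
  set d := hτ.eigenvalues
  have hB : star U * A * U ∈ unitaryGroup ι ℂ :=
    mul_mem (mul_mem (Unitary.star_mem hτ.eigenvectorUnitary.2) hA) hτ.eigenvectorUnitary.2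
  have htrace : (A * τ).trace = ∑ i, (star U * A * U) i i * d i := by
    conv_lhs => rw [hτ.spectral_theorem, Unitary.conjStarAlgAut_apply]
    rw [← mul_assoc, ← mul_assoc, trace_mul_cycle, ← mul_assoc, trace]
    simp [mul_diagonal, d, U]
  rw [htrace, traceNorm_eq_sum_abs_eigenvalues hτ]
  refine (norm_sum_le _ _).trans (Finset.sum_le_sum fun i _ => ?_)
  rw [norm_mul, Complex.norm_real, Real.norm_eq_abs]
  exact mul_le_of_le_one_left (abs_nonneg _) (entry_norm_bound_of_unitary hB i i)

lemma Finset.countP_sort_ne {α : Type*} [LinearOrder α] (S : Finset α) (b : α) :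
    (S.sort (· ≤ ·)).countP (· ≠ b) = (S.erase b).card := by
  rw [← Finset.filter_ne', Finset.card_def, Finset.filter_val, ← Multiset.countP_eq_card_filter,
    ← Multiset.coe_countP, Finset.sort_eq]

lemma Finset.odd_card_erase_add_card_erase {α : Type*} [DecidableEq α] {S T : Finset α}
    (hS : Even S.card) (hT : Even T.card) {b : α} (hb : b ∈ symmDiff S T) :
    Odd ((S.erase b).card + (T.erase b).card) := by
  rw [Finset.mem_symmDiff] at hb
  rw [Nat.even_iff] at hS hT
  rw [Nat.odd_iff]
  rcases hb with ⟨hbS, hbT⟩ | ⟨hbT, hbS⟩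
  · rw [Finset.card_erase_of_mem hbS, Finset.erase_eq_of_notMem hbT]
    have := Finset.card_pos.mpr ⟨b, hbS⟩
    omega
  · rw [Finset.card_erase_of_mem hbT, Finset.erase_eq_of_notMem hbS]
    have := Finset.card_pos.mpr ⟨b, hbT⟩
    omega

namespace MajoranaFamily

variable (F : MajoranaFamily m)

lemma c_mem_unitaryGroup (j : Fin (2*m)) : F.c j ∈ unitaryGroup (Fin (2^m)) ℂ := by
  rw [mem_unitaryGroup_iff', star_eq_conjTranspose, (F.herm j).eq, F.sq]

lemma c_mul_list_prod (b : Fin (2*m)) (l : List (Fin (2*m))) :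
    F.c b * (l.map F.c).prod =
      (-1 : ℂ) ^ l.countP (· ≠ b) • ((l.map F.c).prod * F.c b) := by
  induction l with
  | nil => simp
  | cons a t ih =>
    simp only [List.map_cons, List.prod_cons, List.countP_cons]
    by_cases hab : a = b
    · subst hab
      simp [← mul_assoc, ih]
    · rw [← mul_assoc, F.anticomm b a (Ne.symm hab), neg_mul, mul_assoc, ih, mul_smul_comm]
      simp [hab, pow_succ, mul_assoc]

lemma c_mul_majProd (b : Fin (2*m)) (S : Finset (Fin (2*m))) :
    F.c b * majProd F S = (-1 : ℂ) ^ (S.erase b).card • (majProd F S * F.c b) := by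
  rw [majProd, c_mul_list_prod, Finset.countP_sort_ne]

lemma c_mul_conjTranspose_majProd (b : Fin (2*m)) (S : Finset (Fin (2*m))) :
    F.c b * (majProd F S)ᴴ = (-1 : ℂ) ^ (S.erase b).card • ((majProd F S)ᴴ * F.c b) := by
  have h := congrArg conjTranspose (F.c_mul_majProd b S)
  rw [conjTranspose_mul, conjTranspose_smul, conjTranspose_mul, (F.herm b).eq] at h
  rw [h, smul_smul, star_pow, star_neg, star_one, ← mul_pow]
  simp

lemma majProd_mem_unitaryGroup (S : Finset (Fin (2*m))) :
    majProd F S ∈ unitaryGroup (Fin (2^m)) ℂ :=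
  Submonoid.list_prod_mem _ fun _ hx => by
    obtain ⟨j, -, rfl⟩ := List.mem_map.mp hx
    exact F.c_mem_unitaryGroup j

lemma corrOp_mem_unitaryGroup (S : Finset (Fin (2*m))) :
    corrOp F S ∈ unitaryGroup (Fin (2^m)) ℂ := by
  refine Unitary.smul_mem_of_mem (pow_mem ?_ _) (F.majProd_mem_unitaryGroup S)
  simp [Unitary.mem_iff_star_mul_self]

lemma trace_eq_zero_of_c_mul_eq_neg {b : Fin (2*m)} {X : Mat m} (h : F.c b * X = -(X * F.c b)) :
    X.trace = 0 := by
  have hX : X.trace = -X.trace := calc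
    X.trace = (F.c b * (F.c b * X)).trace := by rw [← mul_assoc, F.sq, one_mul]
    _ = -(X * F.c b * F.c b).trace := by rw [h, mul_neg, trace_neg, trace_mul_comm]
    _ = -X.trace := by rw [mul_assoc, F.sq, mul_one]
  linear_combination hX / 2

lemma trace_conjTranspose_majProd_mul_majProd_of_ne {S T : Finset (Fin (2*m))}
    (hS : Even S.card) (hT : Even T.card) (hST : S ≠ T) :
    ((majProd F S)ᴴ * majProd F T).trace = 0 := by
  obtain ⟨b, hb⟩ := Finset.symmDiff_nonempty.mpr hST
  apply F.trace_eq_zero_of_c_mul_eq_neg (b := b)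
  rw [← mul_assoc, c_mul_conjTranspose_majProd, smul_mul_assoc, mul_assoc, c_mul_majProd,
    mul_smul_comm, smul_smul, ← pow_add,
    (Finset.odd_card_erase_add_card_erase hS hT hb).neg_one_pow, neg_one_smul, mul_assoc]

lemma trace_conjTranspose_corrOp_mul_corrOp {S T : Finset (Fin (2*m))}
    (hS : Even S.card) (hT : Even T.card) :
    ((corrOp F S)ᴴ * corrOp F T).trace = if S = T then 2 ^ m else 0 := by
  split_ifs with hST
  · subst hST
    rw [← star_eq_conjTranspose, mem_unitaryGroup_iff'.mp (F.corrOp_mem_unitaryGroup S)]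
    simp
  · rw [corrOp, corrOp, conjTranspose_smul, smul_mul_smul_comm, trace_smul,
      F.trace_conjTranspose_majProd_mul_majProd_of_ne hS hT hST, smul_zero]

lemma corrOp_empty : corrOp F ∅ = 1 := by
  simp [corrOp, majProd]

lemma trace_conjTranspose_corrOp_mul_sum {S : Finset (Fin (2*m))} (hS : Even S.card)
    {s : Finset (Finset (Fin (2*m)))} (hs : ∀ T ∈ s, Even T.card) (β : Finset (Fin (2*m)) → ℝ) :
    ((corrOp F S)ᴴ * ∑ T ∈ s, β T • corrOp F T).trace =
      if S ∈ s then (β S : ℂ) * 2 ^ m else 0 := by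
  simp only [Finset.mul_sum, trace_sum, mul_smul_comm, trace_smul]
  rw [Finset.sum_congr rfl fun T hT => by
    rw [F.trace_conjTranspose_corrOp_mul_corrOp hS (hs T hT)]]
  simp [Finset.sum_ite_eq, Complex.real_smul]

end MajoranaFamily

theorem stmt_13_general (m : ℕ) (F : MajoranaFamily m) (τ : Mat m) (ε : ℝ)
    (hherm : τ.IsHermitian) (htr : τ.trace = 0) (hnorm : traceNorm τ ≤ ε)
    (α₀ : ℝ) (α : Finset (Fin (2*m)) → ℝ)
    (hrep : τ = (α₀ / 2^m : ℝ) • (1 : Mat m) +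
      ∑ S ∈ Finset.univ.filter
          (fun S : Finset (Fin (2*m)) => S.Nonempty ∧ Even S.card),
        α S • corrOp F S) :
    α₀ = 0 ∧
      ∀ S ∈ Finset.univ.filter
          (fun S : Finset (Fin (2*m)) => S.Nonempty ∧ Even S.card),
        |α S| ≤ ε / 2^m := by
  set s := Finset.univ.filter fun S : Finset (Fin (2*m)) => S.Nonempty ∧ Even S.card
  have hs : ∀ T ∈ s, Even T.card := fun T hT => (Finset.mem_filter.mp hT).2.2
  have hs₀ : ∅ ∉ s := by simp [s]
  obtain ⟨β, hβ₀, hβ⟩ : ∃ β : Finset (Fin (2*m)) → ℝ, β ∅ = α₀ / 2 ^ m ∧ ∀ T ∈ s, β T = α T :=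
    ⟨Function.update α ∅ (α₀ / 2 ^ m), Function.update_self .., fun T hT =>
      Function.update_of_ne (ne_of_mem_of_not_mem hT hs₀) ..⟩
  have hτ : τ = ∑ T ∈ insert ∅ s, β T • corrOp F T := by
    rw [Finset.sum_insert hs₀, hβ₀, F.corrOp_empty, hrep]
    exact congrArg _ (Finset.sum_congr rfl fun T hT => by rw [hβ T hT])
  have hcoeff : ∀ S ∈ insert ∅ s, ((corrOp F S)ᴴ * τ).trace = (β S : ℂ) * 2 ^ m := by
    intro S hS
    have hins : ∀ T ∈ insert ∅ s, Even T.card := by simpa using hs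
    rw [hτ, F.trace_conjTranspose_corrOp_mul_sum (hins S hS) hins, if_pos hS]
  refine ⟨?_, fun S hS => ?_⟩
  · have h := hcoeff ∅ (Finset.mem_insert_self _ _)
    rw [F.corrOp_empty, conjTranspose_one, one_mul, htr, hβ₀] at h
    have h' : α₀ / 2 ^ m * 2 ^ m = 0 := by exact_mod_cast h.symm
    simpa using h'
  · have h := hcoeff S (Finset.mem_insert_of_mem hS)
    rw [hβ S hS] at h
    rw [le_div_iff₀ (by positivity)]
    calc |α S| * 2 ^ m = ‖((corrOp F S)ᴴ * τ).trace‖ := by simp [h]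
      _ ≤ traceNorm τ :=
        norm_trace_mul_le_traceNorm (Unitary.star_mem (F.corrOp_mem_unitaryGroup S)) hherm
      _ ≤ ε := hnorm

/-- For an even Hermitian `τ` with `Tr τ = 0` and `‖τ‖₁ ≤ ε`, written as
`τ = α₀ I/2^m + Σ_S α_S i^k c_{a_1}⋯c_{a_{2k}}`, one has `α₀ = 0` and
`|α_S| ≤ ε/2^m` for every nonempty even subset `S`. -/
theorem stmt_13 (m : ℕ) (hm : 1 ≤ m) (F : MajoranaFamily m) (τ : Mat m) (ε : ℝ)
    (hherm : τ.IsHermitian) (htr : τ.trace = 0) (hnorm : traceNorm τ ≤ ε)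
    (α₀ : ℝ) (α : Finset (Fin (2*m)) → ℝ)
    (hrep : τ = (α₀ / 2^m : ℝ) • (1 : Mat m) +
      ∑ S ∈ Finset.univ.filter
          (fun S : Finset (Fin (2*m)) => S.Nonempty ∧ Even S.card),
        α S • corrOp F S) :
    α₀ = 0 ∧
      ∀ S ∈ Finset.univ.filter
          (fun S : Finset (Fin (2*m)) => S.Nonempty ∧ Even S.card),
        |α S| ≤ ε / 2^m :=
  stmt_13_general m F τ ε hherm htr hnorm α₀ α hrep

end
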